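/- arXiv:1303.5869 — 2 statements merged into one kernel-verified Lean document; each statement's English description precedes it below -/
import Mathlib

section
/- For every z ∈ ℝ the factorization 𝓝(z) = (I_μ ⊗ Ũ_q(z)) · Â · (I_ν ⊗ W̃_r(z)) holds, where ⊗ denotes the Kronecker product. Moreover the matrices Â and 𝒜(0) are related by (D_μ ⊗ I_q)·Â·(D_ν ⊗ I_r) = (I_μ ⊗ D_q)·𝒜(0)·(I_ν ⊗ D_r). -/
open Matrix Kronecker

noncomputable section

/-- The `k × k` shift matrix with `(i,j)` entry `δ_{i+1,j}`. -/
def Sh (k : ℕ) : Matrix (Fin k) (Fin k) ℝ :=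
  Matrix.of fun i j => if (i : ℕ) + 1 = (j : ℕ) then 1 else 0

/-- The matrix `A^k(z) ∈ ℝ^{q×r}`, with entries
`k!/(i!·j!·(k−i−j)!)·z^{k−i−j} = C(k,i)·C(k−i,j)·z^{k−i−j}` for `i+j ≤ k`, else `0`. -/
def Amat (q r k : ℕ) (z : ℝ) : Matrix (Fin q) (Fin r) ℝ :=
  Matrix.of fun i j =>
    if (i : ℕ) + (j : ℕ) ≤ k then
      (Nat.choose k i : ℝ) * (Nat.choose (k - i) j : ℝ) * z ^ (k - i - j)
    else 0

/-- The block matrix `𝒜(z) ∈ ℝ^{μq×νr}` with `(i,j)` block `A^{i+j}(z)`. -/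
def Acal (q r μ ν : ℕ) (z : ℝ) : Matrix (Fin μ × Fin q) (Fin ν × Fin r) ℝ :=
  Matrix.of fun p p' => Amat q r ((p.1 : ℕ) + (p'.1 : ℕ)) z p.2 p'.2

/-- `A^0 = e₀ f₀ᵀ ∈ ℝ^{q×r}`. -/
def A0 (q r : ℕ) : Matrix (Fin q) (Fin r) ℝ :=
  Matrix.of fun a b => if (a : ℕ) = 0 ∧ (b : ℕ) = 0 then 1 else 0

/-- The block matrix `Ā ∈ ℝ^{μq×νr}` with `(i,j)` block `(S_qᵀ)^j · A^0 · S_r^i`. -/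
def Abar (q r μ ν : ℕ) : Matrix (Fin μ × Fin q) (Fin ν × Fin r) ℝ :=
  Matrix.of fun p p' =>
    (((Sh q)ᵀ) ^ (p'.1 : ℕ) * A0 q r * (Sh r) ^ (p.1 : ℕ)) p.2 p'.2

/-- `J_k(z) = z·I_k + S_kᵀ`. -/
def Jmat (k : ℕ) (z : ℝ) : Matrix (Fin k) (Fin k) ℝ := z • 1 + (Sh k)ᵀ

/-- The block lower-triangular matrix `𝓛_{m,k}(z)` with `(i,j)` block `C(i,j)·J_k(z)^{i−j}`
for `i ≥ j` and `0` otherwise. -/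
def Lmat (m k : ℕ) (z : ℝ) : Matrix (Fin m × Fin k) (Fin m × Fin k) ℝ :=
  Matrix.of fun p p' =>
    if (p'.1 : ℕ) ≤ (p.1 : ℕ) then
      (Nat.choose p.1 p'.1 : ℝ) * ((Jmat k z) ^ ((p.1 : ℕ) - (p'.1 : ℕ))) p.2 p'.2
    else 0

/-- Natural (block row-major) identification of `Fin (m*n)` with `Fin m × Fin n`. -/
def bIdx (m n : ℕ) : Fin (m * n) → Fin m × Fin n := fun x => finProdFinEquiv.symm x

/-- `M^{(n)}(z) ∈ ℝ^{q×r}`, the `n`-th derivative of `M(z) = u(z)w(z)`,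
whose `(a,b)` entry is the `n`-th derivative of `z^{a+b}`. -/
def Md (q r n : ℕ) (z : ℝ) : Matrix (Fin q) (Fin r) ℝ :=
  Matrix.of fun a b => iteratedDeriv n (fun t : ℝ => t ^ ((a : ℕ) + (b : ℕ))) z

/-- The block matrix `𝓜(z) ∈ ℝ^{μq×νr}` with `(i,j)` block `M^{(i+j)}(z)`. -/
def Mcal (q r μ ν : ℕ) (z : ℝ) : Matrix (Fin μ × Fin q) (Fin ν × Fin r) ℝ :=
  Matrix.of fun p p' => Md q r ((p.1 : ℕ) + (p'.1 : ℕ)) z p.2 p'.2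

/-- The block matrix `𝓝(z) ∈ ℝ^{μq×νr}` with `(i,j)` block `M^{(i+j)}(z)/(i!·j!)`. -/
def Ncal (q r μ ν : ℕ) (z : ℝ) : Matrix (Fin μ × Fin q) (Fin ν × Fin r) ℝ :=
  Matrix.of fun p p' =>
    Md q r ((p.1 : ℕ) + (p'.1 : ℕ)) z p.2 p'.2 /
      ((Nat.factorial (p.1 : ℕ) : ℝ) * (Nat.factorial (p'.1 : ℕ) : ℝ))

/-- `𝓝^0(z) = (M(z)/0!, …, M^{(ν−1)}(z)/(ν−1)!) ∈ ℝ^{q×νr}`. -/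
def Ncal0 (q r ν : ℕ) (z : ℝ) : Matrix (Fin q) (Fin ν × Fin r) ℝ :=
  Matrix.of fun a p => Md q r (p.1 : ℕ) z a p.2 / (Nat.factorial (p.1 : ℕ) : ℝ)

/-- `𝓜^0(z) = (M(z), M'(z), …, M^{(ν−1)}(z)) ∈ ℝ^{q×νr}`. -/
def M0cal (q r ν : ℕ) (z : ℝ) : Matrix (Fin q) (Fin ν × Fin r) ℝ :=
  Matrix.of fun a p => Md q r (p.1 : ℕ) z a p.2

/-- `U_q(z)` with columns `u(z), u'(z), …, u^{(q−1)}(z)`, where `u_a(z) = z^a`. -/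
def Uq (q : ℕ) (z : ℝ) : Matrix (Fin q) (Fin q) ℝ :=
  Matrix.of fun a j => iteratedDeriv (j : ℕ) (fun t : ℝ => t ^ (a : ℕ)) z

/-- `W_r(z)` with rows `w(z), w'(z), …, w^{(r−1)}(z)`, where `w_b(z) = z^b`. -/
def Wrm (r : ℕ) (z : ℝ) : Matrix (Fin r) (Fin r) ℝ :=
  Matrix.of fun i b => iteratedDeriv (i : ℕ) (fun t : ℝ => t ^ (b : ℕ)) z

/-- `Ũ_m(z)` with entries `C(i,j)·z^{i−j}` for `i ≥ j` and `0` otherwise. -/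
def Ut (m : ℕ) (z : ℝ) : Matrix (Fin m) (Fin m) ℝ :=
  Matrix.of fun i j =>
    if (j : ℕ) ≤ (i : ℕ) then (Nat.choose i j : ℝ) * z ^ ((i : ℕ) - (j : ℕ)) else 0

/-- `W̃_m(z)` with entries `C(j,i)·z^{j−i}` for `j ≥ i` and `0` otherwise. -/
def Wt (m : ℕ) (z : ℝ) : Matrix (Fin m) (Fin m) ℝ :=
  Matrix.of fun i j =>
    if (i : ℕ) ≤ (j : ℕ) then (Nat.choose j i : ℝ) * z ^ ((j : ℕ) - (i : ℕ)) else 0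

/-- `D_m`, the diagonal matrix with `(i,i)` entry `i!`. -/
def Dm (m : ℕ) : Matrix (Fin m) (Fin m) ℝ :=
  Matrix.diagonal fun i => (Nat.factorial (i : ℕ) : ℝ)

/-- The block matrix `Â` whose `(i,j)` block has `(k,l)` entry `C(i+j,i)` if `k+l = i+j`, else 0. -/
def Ahat (q r μ ν : ℕ) : Matrix (Fin μ × Fin q) (Fin ν × Fin r) ℝ :=
  Matrix.of fun p p' =>
    if (p.2 : ℕ) + (p'.2 : ℕ) = (p.1 : ℕ) + (p'.1 : ℕ) then
      (Nat.choose ((p.1 : ℕ) + (p'.1 : ℕ)) (p.1 : ℕ) : ℝ)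
    else 0

/-- `F(z) ∈ ℝ^{r×(r−1)}` with `F_{ii} = −z`, `F_{i+1,i} = 1`, else `0`. -/
def Fm (r : ℕ) (z : ℝ) : Matrix (Fin r) (Fin (r - 1)) ℝ :=
  Matrix.of fun a b =>
    if (a : ℕ) = (b : ℕ) then -z else if (a : ℕ) = (b : ℕ) + 1 then 1 else 0

/-- `F'(z)`, the (constant) derivative of `F(z)`: `−1` on the diagonal, `0` elsewhere. -/
def Fm' (r : ℕ) : Matrix (Fin r) (Fin (r - 1)) ℝ :=
  Matrix.of fun a b => if (a : ℕ) = (b : ℕ) then -1 else 0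

/-- `G(z) ∈ ℝ^{r×r}` with entries `z^{j−i−1}` for `j > i`, else `0`. -/
def Gm (r : ℕ) (z : ℝ) : Matrix (Fin r) (Fin r) ℝ :=
  Matrix.of fun i j => if (i : ℕ) < (j : ℕ) then z ^ ((j : ℕ) - (i : ℕ) - 1) else 0

/-- entrywise `j`-th derivative `G^{(n)}(z)`. -/
def Gd (r n : ℕ) (z : ℝ) : Matrix (Fin r) (Fin r) ℝ :=
  Matrix.of fun i j =>
    iteratedDeriv n (fun t : ℝ => if (i : ℕ) < (j : ℕ) then t ^ ((j : ℕ) - (i : ℕ) - 1) else 0) z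

/-- the row vector `w(z)` with entries `z^b`. -/
def wv (r : ℕ) (z : ℝ) : Fin r → ℝ := fun b => z ^ (b : ℕ)

/-- the `n`-th derivative `w^{(n)}(z)`. -/
def wd (r n : ℕ) (z : ℝ) : Fin r → ℝ := fun b => iteratedDeriv n (fun t : ℝ => t ^ (b : ℕ)) z

/-- the `n`-th derivative `u^{(n)}(z)` of the column vector `u(z)` with entries `z^a`. -/
def ud (q n : ℕ) (z : ℝ) : Fin q → ℝ := fun a => iteratedDeriv n (fun t : ℝ => t ^ (a : ℕ)) z

/-- The matrix `K̄(z)`: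
`[[I_q⊗F(z) + S_q⊗F'(z), −ℓ_q fᵀ ⊗ G(z)], [0, I_{ν−q}⊗I_r − S_{ν−q}⊗G(z)]]`. -/
def Kbar (q r ν : ℕ) (z : ℝ) :
    Matrix (Fin ν × Fin r) ((Fin q × Fin (r - 1)) ⊕ (Fin (ν - q) × Fin r)) ℝ :=
  Matrix.of fun p s =>
    match s with
    | Sum.inl c =>
        (if (p.1 : ℕ) = (c.1 : ℕ) then Fm r z p.2 c.2 else 0) +
        (if (p.1 : ℕ) + 1 = (c.1 : ℕ) then Fm' r p.2 c.2 else 0)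
    | Sum.inr c =>
        (if (p.1 : ℕ) = q + (c.1 : ℕ) then (if p.2 = c.2 then 1 else 0) else 0) +
        (if (p.1 : ℕ) + 1 = q + (c.1 : ℕ) then -(Gm r z p.2 c.2) else 0)

/-- `F_k(z) ∈ ℝ^{(r−k)×(r−1−k)}`. -/
def Fmk (r k : ℕ) (z : ℝ) : Matrix (Fin (r - k)) (Fin (r - (k + 1))) ℝ :=
  Matrix.of fun a b =>
    if (a : ℕ) = (b : ℕ) then -z else if (a : ℕ) = (b : ℕ) + 1 then 1 else 0

/-- `F_k'(z)`, the (constant) derivative of `F_k(z)`. -/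
def Fmk' (r k : ℕ) : Matrix (Fin (r - k)) (Fin (r - (k + 1))) ℝ :=
  Matrix.of fun a b => if (a : ℕ) = (b : ℕ) then -1 else 0

/-- `K_k(z) = I_ν ⊗ F_k(z) + S_ν ⊗ F_k'(z)`. -/
def Kk (ν r k : ℕ) (z : ℝ) :
    Matrix (Fin ν × Fin (r - k)) (Fin ν × Fin (r - (k + 1))) ℝ :=
  (1 : Matrix (Fin ν) (Fin ν) ℝ) ⊗ₖ Fmk r k z + Sh ν ⊗ₖ Fmk' r k

/-- `KP ν r z m = K_0(z) · K_1(z) ⋯ K_{m−1}(z)` (so `KP ν r z μ = 𝒦^{μ−1}(z)`). -/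
def KP (ν r : ℕ) (z : ℝ) : (m : ℕ) → Matrix (Fin ν × Fin r) (Fin ν × Fin (r - m)) ℝ
  | 0 => Matrix.of fun p p' => if p.1 = p'.1 ∧ (p.2 : ℕ) = (p'.2 : ℕ) then 1 else 0
  | m + 1 => KP ν r z m * Kk ν r m z

/-- `𝒜^0 = (A^0, A^1, …, A^{ν−1}) ∈ ℝ^{q×νr}` (at `z = 0`). -/
def A0row (q r ν : ℕ) : Matrix (Fin q) (Fin ν × Fin r) ℝ :=
  Matrix.of fun a p =>
    if (a : ℕ) + (p.2 : ℕ) = (p.1 : ℕ) then (Nat.choose (p.1 : ℕ) (a : ℕ) : ℝ) else 0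

/-- `B^k ∈ ℝ^{r×q}` with entries `(−1)^i·C(q,k+1)` if `i+j = k`, else `0`. -/
def Bk (q r k : ℕ) : Matrix (Fin r) (Fin q) ℝ :=
  Matrix.of fun i j =>
    if (i : ℕ) + (j : ℕ) = k then (-1 : ℝ) ^ (i : ℕ) * (Nat.choose q (k + 1) : ℝ) else 0

/-- `𝓑^0 ∈ ℝ^{νr×q}`, the blocks `B^0, …, B^{ν−1}` stacked vertically. -/
def B0cal (q r ν : ℕ) : Matrix (Fin ν × Fin r) (Fin q) ℝ :=
  Matrix.of fun p j => Bk q r (p.1 : ℕ) p.2 j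

/-- Left multiplication by a fixed matrix, as a linear map. -/
def mulLeftLM {m n p : Type*} [Fintype n] (M : Matrix m n ℝ) :
    Matrix n p ℝ →ₗ[ℝ] Matrix m p ℝ where
  toFun X := M * X
  map_add' X Y := Matrix.mul_add M X Y
  map_smul' c X := by simp [Matrix.mul_smul]

/-- The right inverse `𝓜(z)⁺`. -/
def Mplus (q r μ ν : ℕ) (z : ℝ) : Matrix (Fin ν × Fin r) (Fin μ × Fin q) ℝ :=
  ((1 : Matrix (Fin ν) (Fin ν) ℝ) ⊗ₖ (Wrm r z)⁻¹) * (Lmat ν r 0)⁻¹ *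
    (Abar q r μ ν)ᵀ * (Lmat μ q 0)⁻¹ * ((1 : Matrix (Fin μ) (Fin μ) ℝ) ⊗ₖ (Uq q z)⁻¹)

/-!
Entrywise, with `n = i + j`, both sides of the factorization equal
`C(n, i) · C(k + l, n) · z ^ (k + l - n)`: on the left because the `n`-th derivative of `z ^ (k + l)`
is `n! · C(k + l, n) · z ^ (k + l - n)` and `n! = C(n, i) · i! · j!`, on the right by Vandermonde's
identity `∑_{a + b = n} C(k, a) · C(l, b) = C(k + l, n)`. After the diagonal scalings, both sides of
the second identity have `(k, l)` entry `n!` in block `(i, j)` if `k + l = n`, and `0` otherwise.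
-/

section Kronecker

variable {R ι κ X : Type*} [Semiring R] [Fintype ι] [Fintype κ] [DecidableEq ι]

theorem one_kronecker_mul_apply (U : Matrix κ κ R) (B : Matrix (ι × κ) X R) (i : ι) (k : κ)
    (x : X) : ((1 : Matrix ι ι R) ⊗ₖ U * B) (i, k) x = ∑ k', U k k' * B (i, k') x := by
  simp [mul_apply, Fintype.sum_prod_type, one_apply, ite_mul]

theorem mul_one_kronecker_apply [Fintype X] (B : Matrix X (ι × κ) R) (W : Matrix κ κ R) (x : X)
    (j : ι) (l : κ) : (B * ((1 : Matrix ι ι R) ⊗ₖ W)) x (j, l) = ∑ l', B x (j, l') * W l' l := by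
  simp [mul_apply, Fintype.sum_prod_type, one_apply, mul_ite]

end Kronecker

theorem diagonal_kronecker_one {R m n : Type*} [MulZeroOneClass R] [DecidableEq m]
    [DecidableEq n] (a : m → R) :
    diagonal a ⊗ₖ (1 : Matrix n n R) = diagonal fun p => a p.1 := by
  rw [← diagonal_one, diagonal_kronecker_diagonal]
  simp only [mul_one]

theorem one_kronecker_diagonal {R m n : Type*} [MulZeroOneClass R] [DecidableEq m]
    [DecidableEq n] (b : n → R) :
    (1 : Matrix m m R) ⊗ₖ diagonal b = diagonal fun p => b p.2 := by
  rw [← diagonal_one, diagonal_kronecker_diagonal]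
  simp only [one_mul]

theorem add_choose_left_mul_factorial_mul_factorial (i j : ℕ) :
    (i + j).choose i * i.factorial * j.factorial = (i + j).factorial := by
  simpa using Nat.choose_mul_factorial_mul_factorial (Nat.le_add_right i j)

theorem Ut_apply (m : ℕ) (z : ℝ) (i j : Fin m) :
    Ut m z i j = ((i : ℕ).choose j : ℝ) * z ^ ((i : ℕ) - j) := by
  rw [Ut, of_apply]
  split_ifs with h
  · rfl
  · simp [Nat.choose_eq_zero_of_lt (not_le.mp h)]

theorem Wt_apply (m : ℕ) (z : ℝ) (i j : Fin m) :
    Wt m z i j = ((j : ℕ).choose i : ℝ) * z ^ ((j : ℕ) - i) := by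
  rw [Wt, of_apply]
  split_ifs with h
  · rfl
  · simp [Nat.choose_eq_zero_of_lt (not_le.mp h)]

theorem Md_apply (q r n : ℕ) (z : ℝ) (a : Fin q) (b : Fin r) :
    Md q r n z a b = ((a + b : ℕ).descFactorial n : ℝ) * z ^ ((a : ℕ) + b - n) := by
  simp [Md]

theorem Amat_zero_apply (q r n : ℕ) (k : Fin q) (l : Fin r) :
    Amat q r n 0 k l = if (k : ℕ) + l = n then (n.choose k : ℝ) else 0 := by
  by_cases h : (k : ℕ) + l = n
  · subst h
    simp [Amat]
  · by_cases h' : (k : ℕ) + l ≤ n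
    · simp [Amat, h, h', show n - k - l ≠ 0 by omega]
    · simp [Amat, h, h']

theorem choose_mul_pow_mul_choose_mul_pow (k l a b : ℕ) (z : ℝ) :
    (k.choose a * z ^ (k - a)) * (l.choose b * z ^ (l - b)) =
      ((k.choose a * l.choose b : ℕ) : ℝ) * z ^ (k + l - (a + b)) := by
  rcases lt_or_ge k a with hka | hak
  · simp [Nat.choose_eq_zero_of_lt hka]
  rcases lt_or_ge l b with hlb | hbl
  · simp [Nat.choose_eq_zero_of_lt hlb]
  rw [show k + l - (a + b) = (k - a) + (l - b) by omega, pow_add]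
  push_cast
  ring

theorem sum_fin_ite_add_eq_choose_mul_choose {q r k l : ℕ} (hk : k < q) (hl : l < r) (n : ℕ) :
    ∑ a : Fin q, ∑ b : Fin r, (if (a : ℕ) + b = n then k.choose a * l.choose b else 0) =
      (k + l).choose n := by
  rw [Finset.sum_congr rfl fun (a : Fin q) _ => Fin.sum_univ_eq_sum_range
      (fun b => if (a : ℕ) + b = n then k.choose a * l.choose b else 0) r,
    Fin.sum_univ_eq_sum_range
      (fun a => ∑ b ∈ Finset.range r, if a + b = n then k.choose a * l.choose b else 0) q,
    Nat.add_choose_eq]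
  rw [← Finset.sum_product', ← Finset.sum_filter]
  apply Finset.sum_subset
  · intro p hp
    simpa using (Finset.mem_filter.mp hp).2
  · intro p hp hpq
    rw [Finset.HasAntidiagonal.mem_antidiagonal] at hp
    simp only [Finset.mem_filter, Finset.mem_product, Finset.mem_range, not_and] at hpq
    rcases lt_or_ge p.1 q with h1 | h1
    · rcases lt_or_ge p.2 r with h2 | h2
      · exact absurd hp (hpq ⟨h1, h2⟩)
      · simp [Nat.choose_eq_zero_of_lt (hl.trans_le h2)]
    · simp [Nat.choose_eq_zero_of_lt (hk.trans_le h1)]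

section Entries

variable {q r μ ν : ℕ}

theorem Ncal_apply (z : ℝ) (i : Fin μ) (k : Fin q) (j : Fin ν) (l : Fin r) :
    Ncal q r μ ν z (i, k) (j, l) =
      ((i + j : ℕ).choose i : ℝ) * (((k : ℕ) + l).choose (i + j) : ℝ) *
        z ^ ((k : ℕ) + l - (i + j)) := by
  have hi : ((i : ℕ).factorial : ℝ) ≠ 0 := by positivity
  have hj : ((j : ℕ).factorial : ℝ) ≠ 0 := by positivity
  rw [Ncal, of_apply, Md_apply, Nat.descFactorial_eq_factorial_mul_choose,
    ← add_choose_left_mul_factorial_mul_factorial]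
  push_cast
  field_simp

theorem one_kronecker_Ut_mul_Ahat_mul_one_kronecker_Wt_apply (z : ℝ) (i : Fin μ) (k : Fin q)
    (j : Fin ν) (l : Fin r) :
    ((1 : Matrix (Fin μ) (Fin μ) ℝ) ⊗ₖ Ut q z * Ahat q r μ ν *
        ((1 : Matrix (Fin ν) (Fin ν) ℝ) ⊗ₖ Wt r z)) (i, k) (j, l) =
      ((i + j : ℕ).choose i : ℝ) * (((k : ℕ) + l).choose (i + j) : ℝ) *
        z ^ ((k : ℕ) + l - (i + j)) := by
  set n := (i : ℕ) + j
  have hterm : ∀ (a : Fin q) (b : Fin r),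
      Ut q z k a * Ahat q r μ ν (i, a) (j, b) * Wt r z b l =
        (n.choose i : ℝ) * z ^ ((k : ℕ) + l - n) *
          ((if (a : ℕ) + b = n then (k : ℕ).choose a * (l : ℕ).choose b else 0 : ℕ) : ℝ) := by
    intro a b
    rw [Ut_apply, Wt_apply, Ahat, of_apply]
    split_ifs with h
    · rw [mul_right_comm, choose_mul_pow_mul_choose_mul_pow, h]
      ring
    · simp
  rw [mul_one_kronecker_apply]
  simp only [one_kronecker_mul_apply, Finset.sum_mul, hterm]
  rw [Finset.sum_comm]
  simp only [← Finset.mul_sum, ← Nat.cast_sum]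
  rw [sum_fin_ite_add_eq_choose_mul_choose k.isLt l.isLt]
  ring

theorem Dm_kronecker_one_mul_Ahat_mul_Dm_kronecker_one_apply (i : Fin μ) (k : Fin q) (j : Fin ν)
    (l : Fin r) :
    (Dm μ ⊗ₖ (1 : Matrix (Fin q) (Fin q) ℝ) * Ahat q r μ ν *
        (Dm ν ⊗ₖ (1 : Matrix (Fin r) (Fin r) ℝ))) (i, k) (j, l) =
      if (k : ℕ) + l = i + j then (((i : ℕ) + j).factorial : ℝ) else 0 := by
  rw [Dm, Dm, diagonal_kronecker_one, diagonal_kronecker_one, mul_diagonal, diagonal_mul, Ahat,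
    of_apply]
  split_ifs
  · rw [← add_choose_left_mul_factorial_mul_factorial]
    push_cast
    ring
  · simp

theorem one_kronecker_Dm_mul_Acal_zero_mul_one_kronecker_Dm_apply (i : Fin μ) (k : Fin q)
    (j : Fin ν) (l : Fin r) :
    ((1 : Matrix (Fin μ) (Fin μ) ℝ) ⊗ₖ Dm q * Acal q r μ ν 0 *
        ((1 : Matrix (Fin ν) (Fin ν) ℝ) ⊗ₖ Dm r)) (i, k) (j, l) =
      if (k : ℕ) + l = i + j then (((i : ℕ) + j).factorial : ℝ) else 0 := by
  rw [Dm, Dm, one_kronecker_diagonal, one_kronecker_diagonal, mul_diagonal, diagonal_mul, Acal,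
    of_apply, Amat_zero_apply]
  split_ifs with h
  · rw [← h, ← add_choose_left_mul_factorial_mul_factorial]
    push_cast
    ring
  · simp

end Entries

theorem statement6_general (q r μ ν : ℕ) :
    (∀ z : ℝ,
      Ncal q r μ ν z =
        ((1 : Matrix (Fin μ) (Fin μ) ℝ) ⊗ₖ Ut q z) * Ahat q r μ ν *
          ((1 : Matrix (Fin ν) (Fin ν) ℝ) ⊗ₖ Wt r z)) ∧
    (Dm μ ⊗ₖ (1 : Matrix (Fin q) (Fin q) ℝ)) * Ahat q r μ ν *
        (Dm ν ⊗ₖ (1 : Matrix (Fin r) (Fin r) ℝ)) =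
      ((1 : Matrix (Fin μ) (Fin μ) ℝ) ⊗ₖ Dm q) * Acal q r μ ν 0 *
        ((1 : Matrix (Fin ν) (Fin ν) ℝ) ⊗ₖ Dm r) := by
  refine ⟨fun z => ?_, ?_⟩
  · ext ⟨i, k⟩ ⟨j, l⟩
    rw [Ncal_apply, one_kronecker_Ut_mul_Ahat_mul_one_kronecker_Wt_apply]
  · ext ⟨i, k⟩ ⟨j, l⟩
    rw [Dm_kronecker_one_mul_Ahat_mul_Dm_kronecker_one_apply,
      one_kronecker_Dm_mul_Acal_zero_mul_one_kronecker_Dm_apply]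

theorem statement6 (q r μ ν : ℕ) (hq : 0 < q) (hr : 0 < r) (hμ : 0 < μ) (hν : 0 < ν) :
    (∀ z : ℝ,
      Ncal q r μ ν z =
        ((1 : Matrix (Fin μ) (Fin μ) ℝ) ⊗ₖ Ut q z) * Ahat q r μ ν *
          ((1 : Matrix (Fin ν) (Fin ν) ℝ) ⊗ₖ Wt r z)) ∧
    (Dm μ ⊗ₖ (1 : Matrix (Fin q) (Fin q) ℝ)) * Ahat q r μ ν *
        (Dm ν ⊗ₖ (1 : Matrix (Fin r) (Fin r) ℝ)) =
      ((1 : Matrix (Fin μ) (Fin μ) ℝ) ⊗ₖ Dm q) * Acal q r μ ν 0 *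
        ((1 : Matrix (Fin ν) (Fin ν) ℝ) ⊗ₖ Dm r) :=
  statement6_general q r μ ν
end
end

section
/- Assume r ≥ 2 and ν ≤ q, and let K(z) = I_ν ⊗ F(z) + S_ν ⊗ F'(z) ∈ ℝ^{νr×ν(r−1)}. Then for every z ∈ ℝ: K(z) has full column rank ν(r−1); 𝓝^0(z)·K(z) = 0; and the columns of K(z) form a basis of the kernel of 𝓝^0(z). In particular dim ker 𝓝^0(z) = ν(r−1). -/
open Matrix Kronecker

noncomputable section

/-! Entry `(a, (i, b))` of `𝓝^0(z)` is `C(a+b, i) z^(a+b-i)`, the coefficient of `h^i` in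
`(z+h)^(a+b)`. Pairing row `a` with column `(j, c)` of `K(z)` therefore gives the coefficient of
`h^j` in `(z+h)^(a+c) ((z+h) - z - h) = 0`, i.e. Pascal's rule. The rows `(i, c+1)` of `K(z)`
form `1 - (z I + S_ν) ⊗ S_(r-1)`, a unit because `S_(r-1)` is nilpotent, so `K(z)` is injective.
The rows `a < ν` and columns `(j, 0)` of `𝓝^0(z)` form the unitriangular matrix
`(C(i, j) z^(i-j))`, so `rank 𝓝^0(z) ≥ ν`, and counting dimensions the range of `K(z)`, which lies
in `ker 𝓝^0(z)`, is all of it. -/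

theorem Sh_pow_apply (k m : ℕ) (i j : Fin k) :
    (Sh k ^ m) i j = if (i : ℕ) + m = j then 1 else 0 := by
  induction m generalizing j with
  | zero => simp [Matrix.one_apply, Fin.ext_iff]
  | succ m ih =>
    simp only [pow_succ, Matrix.mul_apply, ih]
    simp only [Sh, Matrix.of_apply, ite_mul, one_mul, zero_mul]
    by_cases h : (i : ℕ) + m < k
    · rw [Fintype.sum_eq_single (⟨i + m, h⟩ : Fin k)
        fun l hl => if_neg fun e : (i : ℕ) + m = l => hl (Fin.ext e.symm)]
      exact if_pos rfl
    · rw [if_neg (by omega)]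
      exact Finset.sum_eq_zero fun l _ => if_neg (by omega)

theorem isNilpotent_Sh (k : ℕ) : IsNilpotent (Sh k) :=
  ⟨k, by ext i j; rw [Sh_pow_apply, if_neg (by omega), Matrix.zero_apply]⟩

theorem vecMul_Sh (k : ℕ) (v : Fin k → ℝ) (j : Fin k) :
    (v ᵥ* Sh k) j = if h : (j : ℕ) = 0 then 0 else v ⟨j - 1, by omega⟩ := by
  rw [Matrix.vecMul, dotProduct]
  split_ifs with h
  · exact Finset.sum_eq_zero fun i _ => by rw [Sh, Matrix.of_apply, if_neg (by omega), mul_zero]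
  · rw [Fintype.sum_eq_single ⟨j - 1, by omega⟩ fun i hi => ?_]
    · rw [Sh, Matrix.of_apply, if_pos (by dsimp only; omega), mul_one]
    · simp only [Sh, Matrix.of_apply, ne_eq, Fin.ext_iff] at hi ⊢
      rw [if_neg (by omega), mul_zero]

theorem vecMul_Fm (r : ℕ) (z : ℝ) (v : Fin r → ℝ) (c : Fin (r - 1)) :
    (v ᵥ* Fm r z) c = v ⟨c + 1, by omega⟩ - z * v ⟨c, by omega⟩ := by
  rw [Matrix.vecMul, dotProduct, Fintype.sum_eq_add ⟨c, by omega⟩ ⟨c + 1, by omega⟩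
    (by simp [Fin.ext_iff]) fun b hb => ?_]
  · simp only [Fm, Matrix.of_apply, if_true, if_neg (Nat.succ_ne_self _), mul_neg, mul_one]
    ring
  · simp only [Fm, Matrix.of_apply, ne_eq, Fin.ext_iff] at hb ⊢
    rw [if_neg hb.1, if_neg hb.2, mul_zero]

theorem vecMul_Fm' (r : ℕ) (v : Fin r → ℝ) (c : Fin (r - 1)) :
    (v ᵥ* Fm' r) c = -v ⟨c, by omega⟩ := by
  rw [Matrix.vecMul, dotProduct, Fintype.sum_eq_single ⟨c, by omega⟩ fun b hb => ?_]
  · simp [Fm']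
  · simp only [Fm', Matrix.of_apply, ne_eq, Fin.ext_iff] at hb ⊢
    rw [if_neg hb, mul_zero]

section Kronecker

variable {R l m n o p : Type*} [CommSemiring R]

theorem Matrix.kronecker_pow [Fintype m] [Fintype n] [DecidableEq m] [DecidableEq n]
    (A : Matrix m m R) (B : Matrix n n R) (k : ℕ) : (A ⊗ₖ B) ^ k = (A ^ k) ⊗ₖ (B ^ k) := by
  induction k with
  | zero => simp
  | succ k ih => rw [pow_succ, pow_succ, pow_succ, ih, Matrix.mul_kronecker_mul]

theorem Matrix.isNilpotent_kronecker_of_isNilpotent_right [Fintype m] [Fintype n] [DecidableEq m]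
    [DecidableEq n] (A : Matrix m m R) {B : Matrix n n R} (hB : IsNilpotent B) :
    IsNilpotent (A ⊗ₖ B) := by
  obtain ⟨k, hk⟩ := hB
  exact ⟨k, by rw [Matrix.kronecker_pow, hk, Matrix.kronecker_zero]⟩

theorem Matrix.mul_kronecker_apply [Fintype m] [Fintype n] (X : Matrix l (m × n) R)
    (A : Matrix m o R) (B : Matrix n p R) (a : l) (j : o) (c : p) :
    (X * (A ⊗ₖ B)) a (j, c) = ∑ i, A i j * ((fun b => X a (i, b)) ᵥ* B) c := by
  simp only [Matrix.mul_apply, Fintype.sum_prod_type, Matrix.kroneckerMap_apply, Matrix.vecMul,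
    dotProduct, Finset.mul_sum]
  exact Finset.sum_congr rfl fun i _ => Finset.sum_congr rfl fun b _ => by ring

end Kronecker

section Field

variable {R l m n : Type*} [Field R] [Fintype n]

theorem Matrix.mulVec_injective_of_isUnit_submatrix [DecidableEq n] {A : Matrix m n R}
    (e : n → m) (h : IsUnit (A.submatrix e id)) : Function.Injective A.mulVec :=
  fun _ _ hxy => Matrix.mulVec_injective_iff_isUnit.mpr h (funext fun p => congrFun hxy (e p))

theorem Matrix.range_mulVecLin_eq_ker_of_mul_eq_zero [Fintype l] [Fintype m] {K : Matrix m n R}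
    {N : Matrix l m R} (hNK : N * K = 0) (hK : Function.Injective K.mulVecLin)
    (hN : Fintype.card m ≤ Fintype.card n + N.rank) :
    LinearMap.range K.mulVecLin = LinearMap.ker N.mulVecLin := by
  refine Submodule.eq_of_le_of_finrank_le ?_ ?_
  · rintro _ ⟨x, rfl⟩
    rw [LinearMap.mem_ker, Matrix.mulVecLin_apply, Matrix.mulVecLin_apply, Matrix.mulVec_mulVec,
      hNK, Matrix.zero_mulVec]
  · have := N.mulVecLin.finrank_range_add_finrank_ker
    rw [LinearMap.finrank_range_of_inj hK]
    simp only [Module.finrank_fintype_fun_eq_card] at this ⊢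
    rw [Matrix.rank] at hN
    omega

end Field

def Kmat (r ν : ℕ) (z : ℝ) : Matrix (Fin ν × Fin r) (Fin ν × Fin (r - 1)) ℝ :=
  (1 : Matrix (Fin ν) (Fin ν) ℝ) ⊗ₖ Fm r z + Sh ν ⊗ₖ Fm' r

theorem Kmat_submatrix_succ (r ν : ℕ) (z : ℝ) :
    (Kmat r ν z).submatrix (fun p => (p.1, ⟨p.2 + 1, by omega⟩)) id
      = 1 - (z • 1 + Sh ν) ⊗ₖ Sh (r - 1) := by
  ext ⟨i, a⟩ ⟨j, b⟩
  simp only [Kmat, Fm, Fm', Sh, Matrix.submatrix_apply, id, Matrix.add_apply, Matrix.sub_apply,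
    Matrix.kroneckerMap_apply, Matrix.smul_apply, Matrix.one_apply, Matrix.of_apply,
    Prod.mk.injEq, Fin.ext_iff, smul_eq_mul]
  split_ifs <;> first | omega | ring

theorem injective_mulVec_Kmat (r ν : ℕ) (z : ℝ) : Function.Injective (Kmat r ν z).mulVec := by
  refine Matrix.mulVec_injective_of_isUnit_submatrix (fun p => (p.1, ⟨p.2 + 1, by omega⟩)) ?_
  rw [Kmat_submatrix_succ]
  exact (Matrix.isNilpotent_kronecker_of_isNilpotent_right _ (isNilpotent_Sh _)).isUnit_one_sub

theorem mul_Kmat_apply {m : Type*} (r ν : ℕ) (z : ℝ) (X : Matrix m (Fin ν × Fin r) ℝ) (a : m)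
    (j : Fin ν) (c : Fin (r - 1)) :
    (X * Kmat r ν z) a (j, c) = X a (j, ⟨c + 1, by omega⟩) - z * X a (j, ⟨c, by omega⟩)
      - ((fun i => X a (i, ⟨c, by omega⟩)) ᵥ* Sh ν) j := by
  rw [Kmat, Matrix.mul_add, Matrix.add_apply, Matrix.mul_kronecker_apply,
    Matrix.mul_kronecker_apply]
  simp only [vecMul_Fm, vecMul_Fm']
  simp only [Matrix.one_apply, ite_mul, one_mul, zero_mul, Finset.sum_ite_eq', Finset.mem_univ,
    if_true, Matrix.vecMul, dotProduct, mul_comm (Sh ν _ j), neg_mul, Finset.sum_neg_distrib]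
  ring

theorem Ncal0_apply (q r ν : ℕ) (z : ℝ) (a : Fin q) (p : Fin ν × Fin r) :
    Ncal0 q r ν z a p = ((a + p.2 : ℕ).choose p.1 : ℝ) * z ^ ((a + p.2 : ℕ) - p.1) := by
  simp only [Ncal0, Md, Matrix.of_apply, iteratedDeriv_pow,
    Nat.descFactorial_eq_factorial_mul_choose, Nat.cast_mul]
  field_simp

theorem cast_choose_succ_mul_pow (m j : ℕ) (z : ℝ) :
    ((m + 1).choose j : ℝ) * z ^ (m + 1 - j) - z * ((m.choose j : ℝ) * z ^ (m - j))
      = if j = 0 then 0 else (m.choose (j - 1) : ℝ) * z ^ (m - (j - 1)) := by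
  rcases j with _ | j
  · simp only [Nat.choose_zero_right, Nat.cast_one, one_mul, Nat.sub_zero, pow_succ, if_true]
    ring
  · rw [Nat.choose_succ_succ, if_neg j.succ_ne_zero, Nat.add_sub_cancel]
    push_cast
    rcases lt_or_ge j m with h | h
    · rw [show m - j = m - (j + 1) + 1 by omega, pow_succ]
      ring
    · rw [Nat.choose_eq_zero_of_lt (by omega : m < j + 1)]
      simp [show m - j = m - (j + 1) by omega]

theorem Ncal0_mul_Kmat (q r ν : ℕ) (z : ℝ) : Ncal0 q r ν z * Kmat r ν z = 0 := by
  ext a ⟨j, c⟩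
  rw [mul_Kmat_apply, vecMul_Sh, Matrix.zero_apply]
  simp only [Ncal0_apply, ← Nat.add_assoc]
  have pascal := cast_choose_succ_mul_pow (a + c) j z
  split_ifs at pascal ⊢ <;> linear_combination pascal

theorem le_rank_Ncal0 {q r ν : ℕ} (hr : 0 < r) (hνq : ν ≤ q) (z : ℝ) :
    ν ≤ (Ncal0 q r ν z).rank := by
  set T := (Ncal0 q r ν z).submatrix (Fin.castLE hνq) fun j => (j, ⟨0, hr⟩)
  have hT : T.IsLowerTriangular := fun i j (hij : i < j) => by
    simp [T, Ncal0_apply, Nat.choose_eq_zero_of_lt hij]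
  have hdet : T.det = 1 := by
    rw [Matrix.det_of_isLowerTriangular T hT]
    exact Finset.prod_eq_one fun i _ => by simp [T, Ncal0_apply]
  calc ν = T.rank := by
        rw [T.rank_of_isUnit ((Matrix.isUnit_iff_isUnit_det T).mpr (hdet ▸ isUnit_one)),
          Fintype.card_fin]
    _ ≤ _ := Matrix.rank_submatrix_le _ _ _

theorem statement9_general (q r ν : ℕ) (hr : 2 ≤ r) (hνq : ν ≤ q) :
    ∀ z : ℝ,
      ((1 : Matrix (Fin ν) (Fin ν) ℝ) ⊗ₖ Fm r z + Sh ν ⊗ₖ Fm' r).rank = ν * (r - 1) ∧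
      Ncal0 q r ν z * ((1 : Matrix (Fin ν) (Fin ν) ℝ) ⊗ₖ Fm r z + Sh ν ⊗ₖ Fm' r) = 0 ∧
      Function.Injective
        (((1 : Matrix (Fin ν) (Fin ν) ℝ) ⊗ₖ Fm r z + Sh ν ⊗ₖ Fm' r).mulVecLin) ∧
      LinearMap.range (((1 : Matrix (Fin ν) (Fin ν) ℝ) ⊗ₖ Fm r z + Sh ν ⊗ₖ Fm' r).mulVecLin) =
        LinearMap.ker (Ncal0 q r ν z).mulVecLin ∧
      Module.finrank ℝ (LinearMap.ker (Ncal0 q r ν z).mulVecLin) = ν * (r - 1) := by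
  intro z
  have hinj : Function.Injective (Kmat r ν z).mulVecLin := injective_mulVec_Kmat r ν z
  have hrank : (Kmat r ν z).rank = ν * (r - 1) := by
    rw [Matrix.rank, LinearMap.finrank_range_of_inj hinj, Module.finrank_fintype_fun_eq_card,
      Fintype.card_prod, Fintype.card_fin, Fintype.card_fin]
  have hrange := Matrix.range_mulVecLin_eq_ker_of_mul_eq_zero (Ncal0_mul_Kmat q r ν z) hinj <| by
    have := le_rank_Ncal0 (by omega : 0 < r) hνq z
    have := Nat.le_mul_of_pos_right ν (by omega : 0 < r)
    simp only [Fintype.card_prod, Fintype.card_fin, Nat.mul_sub_one]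
    omega
  exact ⟨hrank, Ncal0_mul_Kmat q r ν z, hinj, hrange, hrange ▸ hrank⟩

theorem statement9 (q r ν : ℕ) (hq : 0 < q) (hr : 2 ≤ r) (hν : 0 < ν) (hνq : ν ≤ q) :
    ∀ z : ℝ,
      ((1 : Matrix (Fin ν) (Fin ν) ℝ) ⊗ₖ Fm r z + Sh ν ⊗ₖ Fm' r).rank = ν * (r - 1) ∧
      Ncal0 q r ν z * ((1 : Matrix (Fin ν) (Fin ν) ℝ) ⊗ₖ Fm r z + Sh ν ⊗ₖ Fm' r) = 0 ∧
      Function.Injective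
        (((1 : Matrix (Fin ν) (Fin ν) ℝ) ⊗ₖ Fm r z + Sh ν ⊗ₖ Fm' r).mulVecLin) ∧
      LinearMap.range (((1 : Matrix (Fin ν) (Fin ν) ℝ) ⊗ₖ Fm r z + Sh ν ⊗ₖ Fm' r).mulVecLin) =
        LinearMap.ker (Ncal0 q r ν z).mulVecLin ∧
      Module.finrank ℝ (LinearMap.ker (Ncal0 q r ν z).mulVecLin) = ν * (r - 1) :=
  statement9_general q r ν hr hνq
end
end
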